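/- Let x be irrational in (0,1), n ≥ 1, and set m = min{a_n, a_{n+1}} and M = max{a_n, a_{n+1}} with 1 ≤ m < M. Then min{Θ_{n-1}(x), Θ_n(x)} ≤ (m+1)/((m+1)M + 1) ≤ 2/5. -/

import Mathlib

/-- The Gauss map `T(x) = 1/x - ⌊1/x⌋`, with `T(0) = 0`. -/
noncomputable def gaussMap (x : ℝ) : ℝ := if x = 0 then 0 else 1 / x - ⌊1 / x⌋

/-- The `n`-th partial quotient `a_n` of the RCF expansion of `x` (for `n ≥ 1`). -/
noncomputable def rcfA (x : ℝ) (n : ℕ) : ℤ := ⌊1 / gaussMap^[n - 1] x⌋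

/-- Numerators `p_n` of the RCF convergents of `x ∈ (0,1)`. -/
noncomputable def rcfP (x : ℝ) : ℕ → ℤ
  | 0 => 0
  | 1 => 1
  | n + 2 => rcfA x (n + 2) * rcfP x (n + 1) + rcfP x n

/-- Denominators `q_n` of the RCF convergents of `x ∈ (0,1)`. -/
noncomputable def rcfQ (x : ℝ) : ℕ → ℤ
  | 0 => 1
  | 1 => rcfA x 1
  | n + 2 => rcfA x (n + 2) * rcfQ x (n + 1) + rcfQ x n

/-- Approximation coefficient `Θ_n(x) = q_n² |x - p_n/q_n|`. -/
noncomputable def Theta (x : ℝ) (n : ℕ) : ℝ :=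
  (rcfQ x n : ℝ) ^ 2 * |x - (rcfP x n : ℝ) / (rcfQ x n : ℝ)|

lemma gauss_step (x : ℝ) (hx : x ∈ Set.Ioo (0 : ℝ) 1) (hirr : Irrational x) :
    gaussMap x ∈ Set.Ioo (0 : ℝ) 1 ∧ Irrational (gaussMap x) := by
  have hx0 : x ≠ 0 := ne_of_gt hx.1
  have h1 : Irrational (1 / x) := by simpa [one_div] using hirr.inv
  have hirr' : Irrational (1 / x - (⌊1 / x⌋ : ℝ)) := h1.sub_intCast ⌊1 / x⌋
  have hg : gaussMap x = 1 / x - (⌊1 / x⌋ : ℝ) := by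
    simp [gaussMap, hx0]
  have hfr : gaussMap x = Int.fract (1 / x) := by
    rw [hg, Int.fract]
  have hgirr : Irrational (gaussMap x) := hg ▸ hirr'
  have hne : gaussMap x ≠ 0 := fun h => hgirr.ne_int 0 (by simpa using h)
  refine ⟨?_, hgirr⟩
  rw [hfr]
  refine ⟨lt_of_le_of_ne (Int.fract_nonneg _) ?_, Int.fract_lt_one _⟩
  rw [← hfr]
  exact Ne.symm hne

lemma tIter_mem (x : ℝ) (hx : x ∈ Set.Ioo (0 : ℝ) 1) (hirr : Irrational x) (k : ℕ) :
    gaussMap^[k] x ∈ Set.Ioo (0 : ℝ) 1 ∧ Irrational (gaussMap^[k] x) := by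
  induction k with
  | zero => simpa using ⟨hx, hirr⟩
  | succ k ih =>
    rw [Function.iterate_succ_apply']
    exact gauss_step _ ih.1 ih.2

lemma tIter_succ (x : ℝ) (hx : x ∈ Set.Ioo (0 : ℝ) 1) (hirr : Irrational x) (k : ℕ) :
    gaussMap^[k + 1] x = 1 / gaussMap^[k] x - (rcfA x (k + 1) : ℝ) := by
  have h := (tIter_mem x hx hirr k).1.1.ne'
  rw [Function.iterate_succ_apply', gaussMap, if_neg h]
  simp [rcfA]

lemma rcfA_one_le (x : ℝ) (hx : x ∈ Set.Ioo (0 : ℝ) 1) (hirr : Irrational x) (k : ℕ) :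
    1 ≤ rcfA x (k + 1) := by
  have ht := (tIter_mem x hx hirr k).1
  have h1 : (1 : ℝ) ≤ 1 / gaussMap^[k] x := by
    rw [le_div_iff₀ ht.1]
    linarith [ht.2]
  show (1 : ℤ) ≤ ⌊1 / gaussMap^[k] x⌋
  exact Int.le_floor.2 (by exact_mod_cast h1)

lemma rcfQ_pos (x : ℝ) (hx : x ∈ Set.Ioo (0 : ℝ) 1) (hirr : Irrational x) (j : ℕ) :
    1 ≤ rcfQ x j ∧ rcfQ x j ≤ rcfQ x (j + 1) := by
  induction j with
  | zero =>
    refine ⟨le_refl _, ?_⟩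
    show (1 : ℤ) ≤ rcfA x 1
    exact rcfA_one_le x hx hirr 0
  | succ j ih =>
    have h1 : 1 ≤ rcfQ x (j + 1) := le_trans ih.1 ih.2
    have ha : 1 ≤ rcfA x (j + 2) := rcfA_one_le x hx hirr (j + 1)
    have hq2 : rcfQ x (j + 1 + 1) = rcfA x (j + 2) * rcfQ x (j + 1) + rcfQ x j := rfl
    refine ⟨h1, ?_⟩
    rw [hq2]
    nlinarith [ih.1, ih.2]

lemma rcfQ_bound (x : ℝ) (hx : x ∈ Set.Ioo (0 : ℝ) 1) (hirr : Irrational x) (k : ℕ) :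
    rcfA x (k + 1) * rcfQ x k ≤ rcfQ x (k + 1) ∧
      rcfQ x (k + 1) ≤ (rcfA x (k + 1) + 1) * rcfQ x k := by
  cases k with
  | zero =>
    constructor
    · show rcfA x 1 * 1 ≤ rcfA x 1; simp
    · show rcfA x 1 ≤ (rcfA x 1 + 1) * 1; simp
  | succ j =>
    have hq2 : rcfQ x (j + 1 + 1) = rcfA x (j + 1 + 1) * rcfQ x (j + 1) + rcfQ x j := rfl
    have h0 := rcfQ_pos x hx hirr j
    have h1 : 1 ≤ rcfQ x (j + 1) := le_trans h0.1 h0.2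
    constructor
    · rw [hq2]; nlinarith [h0.1]
    · rw [hq2]; nlinarith [h0.2]

lemma rcf_identity (x : ℝ) (hx : x ∈ Set.Ioo (0 : ℝ) 1) (hirr : Irrational x) (k : ℕ) :
    x * ((rcfQ x (k + 1) : ℝ) + (rcfQ x k : ℝ) * gaussMap^[k + 1] x)
      = (rcfP x (k + 1) : ℝ) + (rcfP x k : ℝ) * gaussMap^[k + 1] x := by
  induction k with
  | zero =>
    have ht : gaussMap^[0 + 1] x = 1 / x - (rcfA x 1 : ℝ) := by
      simpa using tIter_succ x hx hirr 0
    have hx0 : x ≠ 0 := ne_of_gt hx.1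
    show x * ((rcfA x 1 : ℝ) + ((1 : ℤ) : ℝ) * gaussMap^[0 + 1] x)
        = ((1 : ℤ) : ℝ) + ((0 : ℤ) : ℝ) * gaussMap^[0 + 1] x
    rw [ht]
    field_simp
    ring
  | succ k ih =>
    have ht1 := (tIter_mem x hx hirr (k + 1)).1
    have hne : gaussMap^[k + 1] x ≠ 0 := ht1.1.ne'
    have key : gaussMap^[k + 1] x * ((rcfA x (k + 1 + 1) : ℝ) + gaussMap^[k + 1 + 1] x)
        = 1 := by
      rw [tIter_succ x hx hirr (k + 1)]
      have h3 : (rcfA x (k + 1 + 1) : ℝ) + (1 / gaussMap^[k + 1] x - (rcfA x (k + 1 + 1) : ℝ))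
          = 1 / gaussMap^[k + 1] x := by ring
      rw [h3, one_div, mul_inv_cancel₀ hne]
    have hq2 : rcfQ x (k + 1 + 1) = rcfA x (k + 1 + 1) * rcfQ x (k + 1) + rcfQ x k := rfl
    have hp2 : rcfP x (k + 1 + 1) = rcfA x (k + 1 + 1) * rcfP x (k + 1) + rcfP x k := rfl
    rw [hq2, hp2]
    push_cast
    linear_combination ((rcfA x (k + 1 + 1) : ℝ) + gaussMap^[k + 1 + 1] x) * ih
      - (x * (rcfQ x k : ℝ) - (rcfP x k : ℝ)) * key

lemma rcf_det (x : ℝ) (k : ℕ) :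
    rcfP x (k + 1) * rcfQ x k - rcfP x k * rcfQ x (k + 1) = (-1) ^ k := by
  induction k with
  | zero => simp [rcfP, rcfQ]
  | succ k ih =>
    have hq2 : rcfQ x (k + 1 + 1) = rcfA x (k + 1 + 1) * rcfQ x (k + 1) + rcfQ x k := rfl
    have hp2 : rcfP x (k + 1 + 1) = rcfA x (k + 1 + 1) * rcfP x (k + 1) + rcfP x k := rfl
    rw [hq2, hp2]
    linear_combination (-1 : ℤ) * ih

lemma theta_core (x t Q' Q P' P s : ℝ) (ht : 0 < t) (hQ' : 0 < Q') (hQ : 0 < Q)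
    (hid : x * (Q + Q' * t) = P + P' * t) (hdet : P * Q' - P' * Q = s) (hs : |s| = 1) :
    Q' ^ 2 * |x - P' / Q'| = Q' / (Q + Q' * t) ∧
      Q ^ 2 * |x - P / Q| = Q * t / (Q + Q' * t) := by
  have hD : 0 < Q + Q' * t := by nlinarith
  have h1 : x - P' / Q' = s * (1 / (Q' * (Q + Q' * t))) := by
    field_simp
    linear_combination Q' * hid + hdet
  have h2 : x - P / Q = (-s) * (t / (Q * (Q + Q' * t))) := by
    field_simp
    linear_combination Q * hid - t * hdet
  constructor
  · rw [h1, abs_mul, hs, one_mul, abs_of_pos (by positivity : (0:ℝ) < 1 / (Q' * (Q + Q' * t)))]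
    field_simp
  · rw [h2, abs_mul, abs_neg, hs, one_mul,
      abs_of_pos (by positivity : (0:ℝ) < t / (Q * (Q + Q' * t)))]
    field_simp

lemma theta_formulas (x : ℝ) (hx : x ∈ Set.Ioo (0 : ℝ) 1) (hirr : Irrational x) (k : ℕ) :
    Theta x k = (rcfQ x k : ℝ) /
        ((rcfQ x (k + 1) : ℝ) + (rcfQ x k : ℝ) * gaussMap^[k + 1] x) ∧
      Theta x (k + 1) = (rcfQ x (k + 1) : ℝ) * gaussMap^[k + 1] x /
        ((rcfQ x (k + 1) : ℝ) + (rcfQ x k : ℝ) * gaussMap^[k + 1] x) := by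
  have ht := (tIter_mem x hx hirr (k + 1)).1
  have hQ'1 : (1 : ℝ) ≤ (rcfQ x k : ℝ) := by exact_mod_cast (rcfQ_pos x hx hirr k).1
  have hQ1 : (1 : ℝ) ≤ (rcfQ x (k + 1) : ℝ) := by
    exact_mod_cast le_trans (rcfQ_pos x hx hirr k).1 (rcfQ_pos x hx hirr k).2
  have hdet : (rcfP x (k + 1) : ℝ) * (rcfQ x k : ℝ)
      - (rcfP x k : ℝ) * (rcfQ x (k + 1) : ℝ) = ((-1 : ℝ)) ^ k := by
    exact_mod_cast rcf_det x k
  have hs : |((-1 : ℝ)) ^ k| = 1 := by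
    rw [abs_pow, abs_neg, abs_one, one_pow]
  have h := theta_core x (gaussMap^[k + 1] x) (rcfQ x k : ℝ) (rcfQ x (k + 1) : ℝ)
    (rcfP x k : ℝ) (rcfP x (k + 1) : ℝ) ((-1 : ℝ) ^ k) ht.1 (by linarith) (by linarith)
    (rcf_identity x hx hirr k) hdet hs
  exact ⟨h.1, h.2⟩

theorem easy_case_ne_min (x : ℝ) (hx : x ∈ Set.Ioo (0 : ℝ) 1) (hirr : Irrational x)
    (n : ℕ) (hn : 1 ≤ n) (m M : ℕ) (hm : 1 ≤ m) (hmM : m < M)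
    (hminA : min (rcfA x n) (rcfA x (n + 1)) = m)
    (hmaxA : max (rcfA x n) (rcfA x (n + 1)) = M) :
    min (Theta x (n - 1)) (Theta x n) ≤ ((m : ℝ) + 1) / (((m : ℝ) + 1) * M + 1) ∧
      ((m : ℝ) + 1) / (((m : ℝ) + 1) * M + 1) ≤ 2 / 5 := by
  obtain ⟨k, rfl⟩ : ∃ k, n = k + 1 := ⟨n - 1, (Nat.succ_pred_eq_of_pos hn).symm⟩
  have hk1 : k + 1 - 1 = k := rfl
  have ht := (tIter_mem x hx hirr (k + 1)).1
  have hQ'1 : (1 : ℝ) ≤ (rcfQ x k : ℝ) := by exact_mod_cast (rcfQ_pos x hx hirr k).1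
  have hQ1 : (1 : ℝ) ≤ (rcfQ x (k + 1) : ℝ) := by
    exact_mod_cast le_trans (rcfQ_pos x hx hirr k).1 (rcfQ_pos x hx hirr k).2
  have hD : (0 : ℝ) < (rcfQ x (k + 1) : ℝ) + (rcfQ x k : ℝ) * gaussMap^[k + 1] x := by
    nlinarith [ht.1, ht.2]
  have hthm := theta_formulas x hx hirr k
  have hm1 : (1 : ℝ) ≤ (m : ℝ) := by exact_mod_cast hm
  have hM1 : (m : ℝ) + 1 ≤ (M : ℝ) := by exact_mod_cast hmM
  have hden : (0 : ℝ) < ((m : ℝ) + 1) * M + 1 := by positivity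
  -- relation between rcfA (k+2) and t := gaussMap^[k+1] x
  have hAfloor : rcfA x (k + 1 + 1) = ⌊1 / gaussMap^[k + 1] x⌋ := by simp [rcfA]
  have htub : (rcfA x (k + 1 + 1) : ℝ) * gaussMap^[k + 1] x ≤ 1 := by
    have h := Int.floor_le (1 / gaussMap^[k + 1] x)
    rw [← hAfloor] at h
    calc (rcfA x (k + 1 + 1) : ℝ) * gaussMap^[k + 1] x
        ≤ (1 / gaussMap^[k + 1] x) * gaussMap^[k + 1] x :=
          mul_le_mul_of_nonneg_right h (le_of_lt ht.1)
      _ = 1 := by rw [one_div, inv_mul_cancel₀ ht.1.ne']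
  have htlb : (1 : ℝ) ≤ ((rcfA x (k + 1 + 1) : ℝ) + 1) * gaussMap^[k + 1] x := by
    have h := Int.lt_floor_add_one (1 / gaussMap^[k + 1] x)
    rw [← hAfloor] at h
    have h2 := mul_lt_mul_of_pos_right h ht.1
    rw [one_div, inv_mul_cancel₀ ht.1.ne'] at h2
    push_cast at h2 ⊢
    linarith
  have hQb := rcfQ_bound x hx hirr k
  have hQlow : (rcfA x (k + 1) : ℝ) * (rcfQ x k : ℝ) ≤ (rcfQ x (k + 1) : ℝ) := by
    exact_mod_cast hQb.1
  have hQup : (rcfQ x (k + 1) : ℝ) ≤ ((rcfA x (k + 1) : ℝ) + 1) * (rcfQ x k : ℝ) := by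
    exact_mod_cast hQb.2
  constructor
  · rcases le_total (rcfA x (k + 1)) (rcfA x (k + 1 + 1)) with hc | hc
    · -- a_n = m, a_{n+1} = M
      have hAm : rcfA x (k + 1) = (m : ℤ) := by rw [← hminA]; exact (min_eq_left hc).symm
      have hBM : rcfA x (k + 1 + 1) = (M : ℤ) := by rw [← hmaxA]; exact (max_eq_right hc).symm
      have hQup' : (rcfQ x (k + 1) : ℝ) ≤ ((m : ℝ) + 1) * (rcfQ x k : ℝ) := by
        rw [hAm] at hQup; exact_mod_cast hQup
      have htub' : (M : ℝ) * gaussMap^[k + 1] x ≤ 1 := by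
        rw [hBM] at htub; exact_mod_cast htub
      refine le_trans (min_le_right _ _) ?_
      rw [hthm.2, div_le_div_iff₀ hD hden]
      nlinarith [mul_le_mul_of_nonneg_right hQup' (le_of_lt ht.1),
        mul_le_mul_of_nonneg_left
          (mul_le_mul_of_nonneg_right htub' (by linarith : (0:ℝ) ≤ (rcfQ x (k + 1) : ℝ)))
          (by linarith : (0:ℝ) ≤ (m : ℝ) + 1)]
    · -- a_{n+1} = m, a_n = M
      have hAm : rcfA x (k + 1 + 1) = (m : ℤ) := by rw [← hminA]; exact (min_eq_right hc).symm
      have hBM : rcfA x (k + 1) = (M : ℤ) := by rw [← hmaxA]; exact (max_eq_left hc).symm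
      have hQlow' : (M : ℝ) * (rcfQ x k : ℝ) ≤ (rcfQ x (k + 1) : ℝ) := by
        rw [hBM] at hQlow; exact_mod_cast hQlow
      have htlb' : (1 : ℝ) ≤ ((m : ℝ) + 1) * gaussMap^[k + 1] x := by
        rw [hAm] at htlb; push_cast at htlb ⊢; linarith
      refine le_trans (min_le_left _ _) ?_
      rw [hk1, hthm.1, div_le_div_iff₀ hD hden]
      nlinarith [mul_le_mul_of_nonneg_left hQlow' (by linarith : (0:ℝ) ≤ (m : ℝ) + 1),
        mul_le_mul_of_nonneg_right htlb' (by linarith : (0:ℝ) ≤ (rcfQ x k : ℝ))]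
  · rw [div_le_div_iff₀ hden (by norm_num)]
    nlinarith [mul_le_mul_of_nonneg_left hM1 (by linarith : (0:ℝ) ≤ 2 * ((m : ℝ) + 1)),
      mul_nonneg (by linarith : (0:ℝ) ≤ (m : ℝ) - 1) (by linarith : (0:ℝ) ≤ 2 * (m : ℝ) + 1)]
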